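/- Let $\delta_{11}, \delta_{22} \in [0,1)$ and set $\Delta_{11} = 1 - \delta_{11}$, $\Delta_{22} = 1 - \delta_{22}$. Define $m(x) = \min\left\{ \frac{(1+\delta_{11})x - \delta_{11}}{1-\delta_{11}},\; \frac{x}{1-\delta_{11}},\; \frac{(2-\delta_{22})(1-x)}{1-\delta_{22}},\; \frac{2(1-x)}{1-\delta_{22}} \right\}$. Then the maximum of $m$ over $x \in (1/2, 1]$ is attained at $a = \frac{\Delta_{11} + \Delta_{22}}{\Delta_{11} + 2\Delta_{22}}$ with value $t = m(a) = \frac{1 + \Delta_{22}}{\Delta_{11} + 2\Delta_{22}}$. -/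
import Mathlib


theorem stmt_5 (δ11 δ22 : ℝ) (h11 : δ11 ∈ Set.Ico (0 : ℝ) 1) (h22 : δ22 ∈ Set.Ico (0 : ℝ) 1)
    (Δ11 Δ22 : ℝ) (hΔ11 : Δ11 = 1 - δ11) (hΔ22 : Δ22 = 1 - δ22)
    (m : ℝ → ℝ)
    (hm : ∀ x, m x =
      min (min (((1 + δ11) * x - δ11) / (1 - δ11)) (x / (1 - δ11)))
          (min (((2 - δ22) * (1 - x)) / (1 - δ22)) ((2 * (1 - x)) / (1 - δ22))))
    (a t : ℝ) (ha : a = (Δ11 + Δ22) / (Δ11 + 2 * Δ22))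
    (ht : t = (1 + Δ22) / (Δ11 + 2 * Δ22)) :
    a ∈ Set.Ioc (1/2 : ℝ) 1 ∧ (∀ x ∈ Set.Ioc (1/2 : ℝ) 1, m x ≤ m a) ∧ m a = t := by
  obtain ⟨h110, h111⟩ := h11
  obtain ⟨h220, h221⟩ := h22
  have hs : (0:ℝ) < 1 - δ11 := by linarith
  have hu : (0:ℝ) < 1 - δ22 := by linarith
  subst hΔ11 hΔ22 ha ht
  have hD : (0:ℝ) < (1 - δ11) + 2 * (1 - δ22) := by linarith
  have haIoc : ((1 - δ11) + (1 - δ22)) / ((1 - δ11) + 2 * (1 - δ22)) ∈ Set.Ioc (1/2 : ℝ) 1 := by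
    constructor
    · rw [lt_div_iff₀ hD]; linarith
    · rw [div_le_one hD]; linarith
  have ha1 : ((1 - δ11) + (1 - δ22)) / ((1 - δ11) + 2 * (1 - δ22)) ≤ 1 := haIoc.2
  -- value of first component at a
  have hA : ((1 + δ11) * (((1 - δ11) + (1 - δ22)) / ((1 - δ11) + 2 * (1 - δ22))) - δ11) / (1 - δ11)
      = (1 + (1 - δ22)) / ((1 - δ11) + 2 * (1 - δ22)) := by
    field_simp
    ring
  have hC : ((2 - δ22) * (1 - (((1 - δ11) + (1 - δ22)) / ((1 - δ11) + 2 * (1 - δ22))))) / (1 - δ22)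
      = (1 + (1 - δ22)) / ((1 - δ11) + 2 * (1 - δ22)) := by
    field_simp
    ring
  have hma : m (((1 - δ11) + (1 - δ22)) / ((1 - δ11) + 2 * (1 - δ22)))
      = (1 + (1 - δ22)) / ((1 - δ11) + 2 * (1 - δ22)) := by
    rw [hm, hA, hC]
    have hB : (1 + (1 - δ22)) / ((1 - δ11) + 2 * (1 - δ22))
        ≤ (((1 - δ11) + (1 - δ22)) / ((1 - δ11) + 2 * (1 - δ22))) / (1 - δ11) := by
      rw [← hA]
      apply div_le_div_of_nonneg_right _ hs.le
      nlinarith [mul_le_mul_of_nonneg_left ha1 h110]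
    have hD' : (1 + (1 - δ22)) / ((1 - δ11) + 2 * (1 - δ22))
        ≤ (2 * (1 - (((1 - δ11) + (1 - δ22)) / ((1 - δ11) + 2 * (1 - δ22))))) / (1 - δ22) := by
      rw [← hC]
      apply div_le_div_of_nonneg_right _ hu.le
      nlinarith [mul_le_mul_of_nonneg_left ha1 h220]
    rw [min_eq_left hB, min_eq_left hD']
    exact min_self _
  refine ⟨haIoc, ?_, hma⟩
  intro x hx
  rw [hma, hm]
  rcases le_total x (((1 - δ11) + (1 - δ22)) / ((1 - δ11) + 2 * (1 - δ22))) with hxa | hxa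
  · refine le_trans (min_le_left _ _) (le_trans (min_le_left _ _) ?_)
    rw [div_le_div_iff₀ hs hD]
    have hx' : x * ((1 - δ11) + 2 * (1 - δ22)) ≤ (1 - δ11) + (1 - δ22) := by
      rwa [← le_div_iff₀ hD]
    nlinarith [mul_le_mul_of_nonneg_left hx' (by linarith : (0:ℝ) ≤ 1 + δ11)]
  · refine le_trans (min_le_right _ _) (le_trans (min_le_left _ _) ?_)
    rw [div_le_div_iff₀ hu hD]
    have hx' : (1 - δ11) + (1 - δ22) ≤ x * ((1 - δ11) + 2 * (1 - δ22)) := by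
      rwa [← div_le_iff₀ hD]
    nlinarith
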